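/- Let κ be an inaccessible cardinal with 2^{<κ} = κ. The forcing K_κ (the poset adding a κ-regressive κ-Kurepa tree) is κ^+-cc. -/

import Mathlib

set_option autoImplicit false

noncomputable section

open FirstOrder Language Set

universe u

/-! ## The language of set theory (one binary relation, read as membership) -/

/-- We read the binary relation of `Language.order` as set-membership. -/
instance ZFSet.instLE : LE ZFSet.{0} := ⟨fun x y => x ∈ y⟩

instance zfStructure : Language.order.Structure ZFSet.{0} := Language.orderStructure ZFSet


instance subclassStructure (W : Set ZFSet.{0}) : Language.order.Structure W :=
  Language.orderStructure W

/-! ## Von Neumann ordinals inside `ZFSet` -/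

/-- The von Neumann ordinal associated to an ordinal. -/
def ordZF (o : Ordinal.{0}) : ZFSet.{0} :=
  ZFSet.range (fun i : o.ToType => ordZF ((Ordinal.ToType.mk (o := o)).symm i).1)
termination_by o
decreasing_by exact ((Ordinal.ToType.mk (o := o)).symm i).2

/-- `V_θ` as a class of sets, relative to an ambient class `W`. -/
def VsetIn (W : Set ZFSet.{0}) (θ : Ordinal.{0}) : Set ZFSet.{0} :=
  {x | x ∈ W ∧ x.rank < θ}

/-- `V_θ` as a class of sets. -/
def Vset (θ : Ordinal.{0}) : Set ZFSet.{0} := VsetIn Set.univ θ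

/-- Code a set of ordinals, bounded by `b`, as a `ZFSet`. -/
def zfOfSet (X : Set Ordinal.{0}) (b : Ordinal.{0}) : ZFSet.{0} :=
  ZFSet.sep (fun z => ∃ α ∈ X, z = ordZF α) (ordZF b)

/-! ## Clubs and stationary sets -/

/-- `C` is closed and unbounded in `λ`. -/
def IsClubIn (C : Set Ordinal.{0}) (l : Ordinal.{0}) : Prop :=
  (∀ x ∈ C, x < l) ∧ (∀ a < l, ∃ b ∈ C, a ≤ b) ∧
    (∀ a < l, (∀ b < a, ∃ c ∈ C, b < c ∧ c < a) → (0 < a) → a ∈ C)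

/-- `S` is stationary in `λ`. -/
def IsStationaryIn (S : Set Ordinal.{0}) (l : Ordinal.{0}) : Prop :=
  ∀ C, IsClubIn C l → (S ∩ C).Nonempty

/-- An ordinal is (the ordinal of) an inaccessible cardinal. -/
def InaccOrd (o : Ordinal.{0}) : Prop :=
  o.card.IsInaccessible ∧ o.card.ord = o

/-- An ordinal is (the ordinal of) a cardinal. -/
def IsCardOrd (o : Ordinal.{0}) : Prop := o.card.ord = o

/-- The cardinal successor of (the cardinality of) an ordinal, as an ordinal. -/
def cardSucc (o : Ordinal.{0}) : Ordinal.{0} := (Order.succ o.card).ord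

/-- A Mahlo cardinal (as an ordinal). -/
def MahloOrd (o : Ordinal.{0}) : Prop :=
  InaccOrd o ∧ IsStationaryIn {δ | δ < o ∧ InaccOrd δ} o

/-- `θ` is a successor inaccessible: inaccessible with an inaccessible predecessor
and no inaccessibles strictly in between. -/
def SuccInacc (θ : Ordinal.{0}) : Prop :=
  InaccOrd θ ∧ ∃ μ < θ, InaccOrd μ ∧ ∀ ν, μ < ν → ν < θ → ¬ InaccOrd ν

/-- `a` is a limit ordinal. -/
def IsLimitOrd (a : Ordinal.{0}) : Prop := 0 < a ∧ ∀ b < a, b + 1 < a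

/-! ## The Lévy hierarchy of formulas (with `Σ₀ = ` quantifier-free) -/

mutual
  /-- `Σ_n` formulas (simplified Lévy hierarchy over quantifier-free formulas). -/
  inductive IsSigmaF (L : Language) (α : Type u) : ℕ → ∀ {n : ℕ}, L.BoundedFormula α n → Prop
    | qf {m} {n : ℕ} {φ : L.BoundedFormula α n} : φ.IsQF → IsSigmaF L α m φ → IsSigmaF L α m φ
    | of_qf {n : ℕ} {φ : L.BoundedFormula α n} : φ.IsQF → IsSigmaF L α 0 φ
    | mono {m} {n : ℕ} {φ : L.BoundedFormula α n} : IsSigmaF L α m φ → IsSigmaF L α (m+1) φ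
    | ex {m} {n : ℕ} {φ : L.BoundedFormula α (n+1)} :
        IsSigmaF L α (m+1) φ.ex → IsSigmaF L α (m+1) φ.ex
    | step {m} {n : ℕ} {φ : L.BoundedFormula α (n+1)} :
        IsPiF L α m φ → IsSigmaF L α (m+1) φ.ex

  /-- `Π_n` formulas. -/
  inductive IsPiF (L : Language) (α : Type u) : ℕ → ∀ {n : ℕ}, L.BoundedFormula α n → Prop
    | of_qf {n : ℕ} {φ : L.BoundedFormula α n} : φ.IsQF → IsPiF L α 0 φ
    | mono {m} {n : ℕ} {φ : L.BoundedFormula α n} : IsPiF L α m φ → IsPiF L α (m+1) φ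
    | step {m} {n : ℕ} {φ : L.BoundedFormula α (n+1)} :
        IsSigmaF L α m φ → IsPiF L α (m+1) φ.all
end

/-- `θ ∈ C^{(n)}` relative to an ambient class `W` : `V_θ ∩ W` is a
`Σ_n`-elementary substructure of `W`. -/
def InCC (W : Set ZFSet.{0}) (n : ℕ) (θ : Ordinal.{0}) : Prop :=
  ∀ (k : ℕ) (φ : Language.order.Formula (Fin k)),
    (IsSigmaF Language.order (Fin k) n φ ∨ IsPiF Language.order (Fin k) n φ) →
    ∀ v : Fin k → (VsetIn W θ),
      φ.Realize v ↔ φ.Realize (fun i => (⟨(v i).1, (v i).2.1⟩ : W))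

/-! ## Elementary embeddings of (relative) classes -/

/-- An elementary embedding `j : W → M` where `M ⊆ W` is a transitive subclass. -/
structure ClassEmbOver (W : Set ZFSet.{0}) where
  M : Set ZFSet.{0}
  M_sub : M ⊆ W
  M_trans : ∀ x ∈ M, ∀ y : ZFSet, y ∈ x → y ∈ M
  j : ZFSet.{0} → ZFSet.{0}
  maps : ∀ x, x ∈ W → j x ∈ M
  elem : ∀ (k : ℕ) (φ : Language.order.Formula (Fin k)) (v : Fin k → W),
    φ.Realize v ↔ φ.Realize (fun i => (⟨j (v i).1, maps _ (v i).2⟩ : M))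

variable {W : Set ZFSet.{0}}

/-- `j` has critical point `κ`. -/
def critAt (e : ClassEmbOver W) (κ : Ordinal.{0}) : Prop :=
  (∀ α < κ, e.j (ordZF α) = ordZF α) ∧ e.j (ordZF κ) ≠ ordZF κ

/-- The image `j(κ)` of an ordinal, as an ordinal. -/
def targ (e : ClassEmbOver W) (κ : Ordinal.{0}) : Ordinal.{0} := (e.j (ordZF κ)).rank

/-- `M^λ ∩ W ⊆ M`. -/
def SeqClosed (e : ClassEmbOver W) (l : Ordinal.{0}) : Prop :=
  ∀ f y : ZFSet.{0}, f ∈ W → ZFSet.IsFunc (ordZF l) y f →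
    (∀ z w : ZFSet, z.pair w ∈ f → w ∈ e.M) → f ∈ e.M

/-- `V_θ ⊆ M`. -/
def VsubM (e : ClassEmbOver W) (θ : Ordinal.{0}) : Prop :=
  ∀ x : ZFSet, x ∈ W → x.rank < θ → x ∈ e.M

/-- A `ZFSet` codes a set of ordinals below `l`. -/
def zfSubsetOrd (s : ZFSet.{0}) (l : Ordinal.{0}) : Prop :=
  ∀ x ∈ s, ∃ α < l, x = ordZF α

/-- The set of ordinals coded by a `ZFSet`. -/
def toOrdSet (s : ZFSet.{0}) : Set Ordinal.{0} := {α | ordZF α ∈ s}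

/-- `M` computes stationary subsets of `l` correctly. -/
def StatCorrect (e : ClassEmbOver W) (l : Ordinal.{0}) : Prop :=
  ∀ s ∈ e.M, zfSubsetOrd s l →
    (IsStationaryIn (toOrdSet s) l ↔
      ∀ C ∈ e.M, zfSubsetOrd C l → IsClubIn (toOrdSet C) l →
        (toOrdSet s ∩ toOrdSet C).Nonempty)

/-! ## Large cardinal notions -/

/-- `κ` is tall with target `θ` (relative to `W`). -/
def TallWithTarget (W : Set ZFSet.{0}) (κ θ : Ordinal.{0}) : Prop :=
  ∃ e : ClassEmbOver W, critAt e κ ∧ SeqClosed e κ ∧ targ e κ = θ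

/-- `κ` is `λ`-supercompact. -/
def IsLamSC (W : Set ZFSet.{0}) (κ l : Ordinal.{0}) : Prop :=
  ∃ e : ClassEmbOver W, critAt e κ ∧ l < targ e κ ∧ SeqClosed e l

/-- `κ` is supercompact. -/
def IsSC (W : Set ZFSet.{0}) (κ : Ordinal.{0}) : Prop :=
  ∀ l, κ < l → IsLamSC W κ l

/-- `κ` is `λ`-`C^{(n)}`-supercompact. -/
def IsLamCnSC (W : Set ZFSet.{0}) (n : ℕ) (κ l : Ordinal.{0}) : Prop :=
  ∃ e : ClassEmbOver W, critAt e κ ∧ l < targ e κ ∧ SeqClosed e l ∧ InCC W n (targ e κ)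

/-- `κ` is `C^{(n)}`-supercompact. -/
def IsCnSC (W : Set ZFSet.{0}) (n : ℕ) (κ : Ordinal.{0}) : Prop :=
  ∀ l, κ < l → IsLamCnSC W n κ l

/-- `κ` is enhanced `C^{(n)}`-tall: for every `λ > κ` there is `θ ∈ C^{(n)}` of
cofinality `> λ` such that `κ` is tall with target `θ`. -/
def EnhancedCnTall (W : Set ZFSet.{0}) (n : ℕ) (κ : Ordinal.{0}) : Prop :=
  ∀ l, κ < l → ∃ θ, InCC W n θ ∧ l < θ.cof.ord ∧ TallWithTarget W κ θ

/-- `κ` is superstrong with target `θ`. -/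
def SuperstrongTarget (W : Set ZFSet.{0}) (κ θ : Ordinal.{0}) : Prop :=
  ∃ e : ClassEmbOver W, critAt e κ ∧ targ e κ = θ ∧ VsubM e θ

/-- `κ` is enhanced superstrong with target `θ`: additionally `M^κ ⊆ M`. -/
def EnhSuperstrongTarget (W : Set ZFSet.{0}) (κ θ : Ordinal.{0}) : Prop :=
  ∃ e : ClassEmbOver W, critAt e κ ∧ targ e κ = θ ∧ VsubM e θ ∧ SeqClosed e κ

/-- `κ` is stationary-correct superstrong with target `θ`. -/
def StatCorrectSuperstrong (W : Set ZFSet.{0}) (κ θ : Ordinal.{0}) : Prop :=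
  ∃ e : ClassEmbOver W, critAt e κ ∧ targ e κ = θ ∧ VsubM e θ ∧ StatCorrect e θ

/-! ## Axiom 𝒜 -/

/-- Axiom `𝒜`, relative to `W`. -/
def AxiomA (W : Set ZFSet.{0}) : Prop :=
  (∀ α : Ordinal, ∃ κ, α < κ ∧ InaccOrd κ) ∧
  (∀ δ l, StatCorrectSuperstrong W δ l → InaccOrd l →
    ∀ θ, δ < θ → θ < l → SuccInacc θ → TallWithTarget W δ θ)

/-- Elementary embedding between two set-sized structures `⟨A,∈⟩ → ⟨B,∈⟩`. -/
structure SetEmb (A B : Set ZFSet.{0}) where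
  j : ZFSet.{0} → ZFSet.{0}
  maps : ∀ x, x ∈ A → j x ∈ B
  elem : ∀ (k : ℕ) (φ : Language.order.Formula (Fin k)) (v : Fin k → A),
    φ.Realize v ↔ φ.Realize (fun i => (⟨j (v i).1, maps _ (v i).2⟩ : B))

/-- critical point for set embeddings. -/
def setCritAt (A B : Set ZFSet.{0}) (e : SetEmb A B) (κ : Ordinal.{0}) : Prop :=
  (∀ α < κ, e.j (ordZF α) = ordZF α) ∧ e.j (ordZF κ) ≠ ordZF κ

/-- `j(κ)` for set embeddings. -/
def setTarg (A B : Set ZFSet.{0}) (e : SetEmb A B) (κ : Ordinal.{0}) : Ordinal.{0} :=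
  (e.j (ordZF κ)).rank


/-! ## Trees with a level function -/

/-- A tree on a set of ordinals, presented with a level function. -/
structure LvTree : Type 1 where
  node : Set Ordinal.{0}
  lt : Ordinal.{0} → Ordinal.{0} → Prop
  level : Ordinal.{0} → Ordinal.{0}
  lt_mem : ∀ {x y}, lt x y → x ∈ node ∧ y ∈ node
  lt_trans' : ∀ {x y z}, lt x y → lt y z → lt x z
  level_mono : ∀ {x y}, lt x y → level x < level y
  pred_linear : ∀ {x y z}, lt y x → lt z x → lt y z ∨ y = z ∨ lt z y
  pred_ex : ∀ x ∈ node, ∀ β < level x, ∃ y, lt y x ∧ level y = β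

/-- The `β`-th level of the tree. -/
def LvTree.lvl (T : LvTree) (β : Ordinal.{0}) : Set Ordinal.{0} :=
  {x | x ∈ T.node ∧ T.level x = β}

/-- The nodes of level `< β`. -/
def LvTree.below (T : LvTree) (β : Ordinal.{0}) : Set Ordinal.{0} :=
  {x | x ∈ T.node ∧ T.level x < β}

/-- Two tree-incomparable nodes. -/
def LvTree.Incomp (T : LvTree) (x y : Ordinal.{0}) : Prop :=
  ¬ T.lt x y ∧ ¬ T.lt y x ∧ x ≠ y

/-- There is a regressive map on the `δ`-th level: `f x <_T x` and for incomparable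
`x, y` every common predecessor lies below both `f x` and `f y`
(i.e. `x ∧ y <_T f x, f y`). -/
def RegressiveAt (T : LvTree) (δ : Ordinal.{0}) : Prop :=
  ∃ f : Ordinal.{0} → Ordinal.{0},
    (∀ x ∈ T.lvl δ, T.lt (f x) x) ∧
    (∀ x ∈ T.lvl δ, ∀ y ∈ T.lvl δ, T.Incomp x y →
      ∀ z, T.lt z x → T.lt z y → T.lt z (f x) ∧ T.lt z (f y))

/-- A chain in the tree. -/
def IsTreeChain (T : LvTree) (b : Set Ordinal.{0}) : Prop :=
  b ⊆ T.node ∧ ∀ x ∈ b, ∀ y ∈ b, T.lt x y ∨ x = y ∨ T.lt y x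

/-- A branch: a maximal chain. -/
def IsTreeBranch (T : LvTree) (b : Set Ordinal.{0}) : Prop :=
  IsTreeChain T b ∧ ∀ b', IsTreeChain T b' → b ⊆ b' → b = b'

/-- A cofinal branch of a tree of height `κ`. -/
def CofBranch (T : LvTree) (κ : Ordinal.{0}) (b : Set Ordinal.{0}) : Prop :=
  IsTreeBranch T b ∧ ∀ β < κ, ∃ x ∈ b, T.level x = β

/-- A `κ`-regressive `κ`-Kurepa tree on `κ`. -/
def KurepaTree (κ : Ordinal.{0}) (T : LvTree) : Prop :=
  T.node ⊆ Set.Iio κ ∧ (∀ x ∈ T.node, T.level x < κ) ∧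
  (∀ β < κ, (T.lvl β).Nonempty) ∧
  (∀ β < κ, Cardinal.mk (T.lvl β) < Cardinal.lift.{1} κ.card) ∧
  Cardinal.lift.{1} (Order.succ κ.card) ≤ Cardinal.mk {b : Set Ordinal.{0} | CofBranch T κ b} ∧
  (∀ δ < κ, InaccOrd δ → RegressiveAt T δ)

/-! ## The forcing `K_κ` adding a `κ`-regressive `κ`-Kurepa tree -/

/-- A condition of `K_κ`: a normal tree on `κ` of successor height `top + 1` with
small levels, regressive maps at inaccessible levels, together with a one-to-one
map `h` from the top level into `κ⁺`. -/
structure KCond (κ : Ordinal.{0}) : Type 1 where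
  t : LvTree
  top : Ordinal.{0}
  h : Ordinal.{0} → Ordinal.{0}
  node_sub : t.node ⊆ Set.Iio κ
  top_lt : top < κ
  level_le : ∀ x ∈ t.node, t.level x ≤ top
  levels_ne : ∀ β ≤ top, (t.lvl β).Nonempty
  small : ∀ β, Cardinal.mk (t.lvl β) < Cardinal.lift.{1} κ.card
  normal : ∀ x ∈ t.node, ∀ β, t.level x ≤ β → β ≤ top → ∃ y ∈ t.lvl β, t.lt x y ∨ x = y
  regr : ∀ δ, δ ≤ top → InaccOrd δ → RegressiveAt t δ
  h_inj : ∀ x ∈ t.lvl top, ∀ y ∈ t.lvl top, h x = h y → x = y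
  h_lt : ∀ x ∈ t.lvl top, h x < cardSucc κ

/-- The order of `K_κ`: `p ≤ q` iff the tree of `q` is the restriction of the tree
of `p` to the height of `q`, `ran(q.h) ⊆ ran(p.h)` and `q.h⁻¹(ξ) <_t p.h⁻¹(ξ)`. -/
def KLE (κ : Ordinal.{0}) (p q : KCond κ) : Prop :=
  q.top ≤ p.top ∧
  (∀ x, x ∈ q.t.node ↔ x ∈ p.t.node ∧ p.t.level x ≤ q.top) ∧
  (∀ x ∈ q.t.node, ∀ y ∈ q.t.node, (q.t.lt x y ↔ p.t.lt x y)) ∧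
  (∀ x ∈ q.t.node, q.t.level x = p.t.level x) ∧
  (∀ ξ, (∃ x ∈ q.t.lvl q.top, q.h x = ξ) → ∃ y ∈ p.t.lvl p.top, p.h y = ξ) ∧
  (∀ x ∈ q.t.lvl q.top, ∀ y ∈ p.t.lvl p.top, q.h x = p.h y → (p.t.lt x y ∨ x = y))

/-!
Two conditions with the same tree whose labellings are *aligned* (`p.h x = q.h y` only for
`x = y`) are compatible: add a level on top with, above each top node `x`, a node labelled
`p.h x` and, when `q.h x ≠ p.h x`, a second node labelled `q.h x`.

A condition's tree is a subset of `κ` of size `< κ`, so as `κ^{<κ} = κ` there are only `κ` trees,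
and it suffices that among `κ⁺` labellings `G i` of a common top level `D` two are aligned. Take
`δ < κ⁺` of cofinality `κ` closed under `γ ↦ sup (G γ '' D)` and such that for `β < δ` every
`graphBelow D (G i) β` is already realised by an index below `δ` (there are only `κ` of them). The
fewer than `κ` values of `G δ` below `δ` lie below some `β < δ`; an index `j < δ` with the same
graph below `β` as `G δ` is then aligned with `δ`.
-/

universe v

open Cardinal

theorem Cardinal.IsStrongPrelimit.lift {c : Cardinal.{u}} (h : c.IsStrongPrelimit) :
    (Cardinal.lift.{v} c).IsStrongPrelimit := by
  intro x hx
  obtain ⟨y, rfl⟩ := mem_range_lift_of_le hx.le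
  rw [← lift_two_power, lift_lt]
  exact h (lift_lt.1 hx)

theorem Cardinal.mk_setOf_subset_mk_lt_le {c : Cardinal.{u}} (hc : c.IsRegular)
    (hc' : c.IsStrongPrelimit) {α : Type u} {T : Set α} (hT : #T ≤ c) :
    #{s : Set α | s ⊆ T ∧ #s < c} ≤ c := by
  obtain ⟨e⟩ : Nonempty (T ↪ c.out) := by rwa [← le_def, mk_out]
  let φ : {s : Set α | s ⊆ T ∧ #s < c} → {u : Set c.out // #u < (#c.out).ord.cof} :=
    fun s => ⟨e '' (Subtype.val ⁻¹' s.1), by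
      rw [mk_out, hc.cof_ord, mk_image_eq e.injective,
        mk_preimage_of_injective_of_subset_range _ _ Subtype.val_injective
          (by rw [Subtype.range_val]; exact s.2.1)]
      exact s.2.2⟩
  have hφ : Function.Injective φ := by
    intro s t hst
    have h := Set.image_injective.2 e.injective (congrArg Subtype.val hst)
    ext x
    by_cases hx : x ∈ T
    · exact Set.ext_iff.1 h ⟨x, hx⟩
    · exact iff_of_false (fun h' => hx (s.2.1 h')) (fun h' => hx (t.2.1 h'))
  calc #{s : Set α | s ⊆ T ∧ #s < c} ≤ #{u : Set c.out // #u < (#c.out).ord.cof} :=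
        mk_le_of_injective hφ
    _ = c := by rw [mk_subset_mk_lt_cof (by rwa [mk_out]), mk_out]

namespace Ordinal

theorem exists_lt_forall_lt_of_mk_lt_cof {l : Ordinal.{u}} {s : Set Ordinal.{u}}
    (hs : ∀ x ∈ s, x < l) (hcard : #s < Cardinal.lift.{u + 1} l.cof) :
    ∃ b < l, ∀ x ∈ s, x < b := by
  refine ⟨sSup ((· + 1) '' s), sSup_add_one_lt_of_lt_cof (by rwa [← lift_cof]) hs,
    fun x hx => (Order.lt_add_one_iff.2 le_rfl).trans_le (le_csSup ?_ (Set.mem_image_of_mem _ hx))⟩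
  exact ⟨l, by rintro _ ⟨y, hy, rfl⟩; exact Order.add_one_le_of_lt (hs y hy)⟩

theorem iSup_Iio_lt_of_card_lt_cof {γ l : Ordinal.{u}} {f : Ordinal.{u} → Ordinal.{u}}
    (hγ : γ.card < l.cof) (hf : ∀ γ' < γ, f γ' < l) : ⨆ γ' : Set.Iio γ, f γ' < l := by
  apply lift_iSup_lt_of_lt_cof (f := fun γ' : Set.Iio γ => f γ') _ (fun γ' => hf γ' γ'.2)
  rw [Cardinal.mk_Iio_ordinal, ← lift_cof, Cardinal.lift_id'.{u, u + 1}, Cardinal.lift_lt]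
  exact hγ

variable (F : Ordinal.{u} → Ordinal.{u})

def closureStep (γ : Ordinal.{u}) : Ordinal.{u} := max γ (⨆ γ' : Set.Iio γ, F γ') + 1

def closureSeq : Ordinal.{u} → Ordinal.{u}
  | η => ⨆ ζ : Set.Iio η, closureStep F (closureSeq ζ)
termination_by η => η
decreasing_by exact ζ.2

variable {F}

theorem closureSeq_eq (η : Ordinal.{u}) :
    closureSeq F η = ⨆ ζ : Set.Iio η, closureStep F (closureSeq F ζ) := by
  rw [closureSeq]

theorem lt_closureStep (γ : Ordinal.{u}) : γ < closureStep F γ :=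
  Order.lt_add_one_iff.2 (le_max_left _ _)

theorem apply_lt_closureStep {γ' γ : Ordinal.{u}} (h : γ' < γ) : F γ' < closureStep F γ :=
  Order.lt_add_one_iff.2 <|
    (Ordinal.le_iSup (fun x : Set.Iio γ => F x) ⟨γ', h⟩).trans (le_max_right _ _)

theorem closureStep_lt_ord {c : Cardinal.{u}} (hc : c.IsRegular) (hF : ∀ γ < c.ord, F γ < c.ord)
    {γ : Ordinal.{u}} (hγ : γ < c.ord) : closureStep F γ < c.ord := by
  have hγc : γ.card < c.ord.cof := by rw [hc.cof_ord]; exact Cardinal.lt_ord.1 hγ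
  have hsup : ⨆ γ' : Set.Iio γ, F γ' < c.ord :=
    iSup_Iio_lt_of_card_lt_cof hγc fun γ' h => hF γ' (h.trans hγ)
  exact (Cardinal.isSuccLimit_ord hc.aleph0_le).add_one_lt (max_lt hγ hsup)

theorem closureStep_closureSeq_le {ζ η : Ordinal.{u}} (h : ζ < η) :
    closureStep F (closureSeq F ζ) ≤ closureSeq F η := by
  rw [closureSeq_eq η]
  exact Ordinal.le_iSup (fun x : Set.Iio η => closureStep F (closureSeq F x)) ⟨ζ, h⟩

theorem strictMono_closureStep_closureSeq : StrictMono fun ζ => closureStep F (closureSeq F ζ) :=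
  fun _ _ h => (closureStep_closureSeq_le h).trans_lt (lt_closureStep _)

theorem closureSeq_lt_ord {c : Cardinal.{u}} (hc : c.IsRegular) (hF : ∀ γ < c.ord, F γ < c.ord)
    {η : Ordinal.{u}} (hη : η.card < c) : closureSeq F η < c.ord := by
  induction η using WellFoundedLT.induction with
  | _ η ih =>
    rw [closureSeq_eq]
    refine iSup_Iio_lt_of_card_lt_cof (f := fun ζ => closureStep F (closureSeq F ζ))
      (by rwa [hc.cof_ord]) fun ζ hζ => closureStep_lt_ord hc hF (ih ζ hζ ?_)
    exact (Ordinal.card_le_card hζ.le).trans_lt hη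

theorem exists_cof_eq_forall_lt_of_isRegular {c : Cardinal.{u}} (hc : c.IsRegular)
    {κ : Ordinal.{u}} (hκ : Order.IsSuccLimit κ) (hκc : κ.card < c)
    (hF : ∀ γ < c.ord, F γ < c.ord) :
    ∃ δ < c.ord, δ.cof = κ.cof ∧ ∀ γ < δ, F γ < δ := by
  refine ⟨closureSeq F κ, closureSeq_lt_ord hc hF hκc, ?_, fun γ hγ => ?_⟩
  · rw [closureSeq_eq]
    exact cof_iSup_Iio (strictMono_closureStep_closureSeq.comp (Subtype.strictMono_coe _))
      hκ.isSuccPrelimit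
  · rw [closureSeq_eq, Ordinal.lt_iSup_iff] at hγ
    obtain ⟨⟨ζ, hζ⟩, hγζ⟩ := hγ
    have hγ' : γ < closureSeq F (ζ + 1) :=
      hγζ.trans_le (closureStep_closureSeq_le (Order.lt_add_one_iff.2 le_rfl))
    exact (apply_lt_closureStep hγ').trans_le (closureStep_closureSeq_le (hκ.add_one_lt hζ))

end Ordinal

section Inaccessible

variable {κ : Ordinal.{0}}

theorem InaccOrd.isSuccLimit (hκ : InaccOrd κ) : Order.IsSuccLimit κ := by
  rw [← hκ.2]
  exact isSuccLimit_ord hκ.1.isRegular.aleph0_le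

theorem InaccOrd.cof_eq (hκ : InaccOrd κ) : κ.cof = κ.card := by
  conv_lhs => rw [← hκ.2]
  exact hκ.1.isRegular.cof_ord

theorem InaccOrd.card_lt (hκ : InaccOrd κ) {o : Ordinal.{0}} (h : o < κ) : o.card < κ.card :=
  lt_ord.1 (hκ.2.symm ▸ h)

theorem InaccOrd.aleph0_le_lift_card (hκ : InaccOrd κ) : ℵ₀ ≤ lift.{1} κ.card := by
  rw [← lift_aleph0.{1, 0}, lift_le]
  exact hκ.1.isRegular.aleph0_le

theorem InaccOrd.isRegular_succ_card (hκ : InaccOrd κ) : (Order.succ κ.card).IsRegular :=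
  isRegular_succ hκ.1.isRegular.aleph0_le

theorem card_le_of_lt_cardSucc {o : Ordinal.{0}} (h : o < cardSucc κ) : o.card ≤ κ.card :=
  Order.lt_succ_iff.1 (lt_ord.1 h)

theorem InaccOrd.lift_card_lt_cof_cardSucc (hκ : InaccOrd κ) :
    lift.{1} κ.card < lift.{1} (cardSucc κ).cof := by
  rw [cardSucc, hκ.isRegular_succ_card.cof_ord, lift_lt]
  exact Order.lt_succ _

theorem InaccOrd.add_lt (hκ : InaccOrd κ) {a b : Ordinal.{0}} (ha : a < κ) (hb : b < κ) :
    a + b < κ := by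
  rw [← hκ.2] at ha hb ⊢
  exact Ordinal.isPrincipal_add_ord hκ.1.isRegular.aleph0_le ha hb

end Inaccessible

section AlignedPair

variable {κ : Ordinal.{0}}

def graphBelow (D : Set Ordinal.{0}) (g : Ordinal.{0} → Ordinal.{0}) (β : Ordinal.{0}) :
    Set (Ordinal.{0} × Ordinal.{0}) :=
  {z | z.1 ∈ D ∧ g z.1 = z.2 ∧ z.2 < β}

theorem mk_graphBelow_le (D : Set Ordinal.{0}) (g : Ordinal.{0} → Ordinal.{0}) (β : Ordinal.{0}) :
    #(graphBelow D g β) ≤ #D := by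
  have hsub : graphBelow D g β ⊆ (fun x => (x, g x)) '' D := by
    rintro ⟨x, y⟩ ⟨hx, hxy, -⟩
    exact ⟨x, hx, congrArg (Prod.mk x) hxy⟩
  exact (mk_le_mk_of_subset hsub).trans mk_image_le

theorem exists_bound_graphBelow (hκ : InaccOrd κ) {D : Set Ordinal.{0}}
    (hD : #D < lift.{1} κ.card) (G : Ordinal.{0} → Ordinal.{0} → Ordinal.{0}) {β : Ordinal.{0}}
    (hβ : β < cardSucc κ) :
    ∃ b < cardSucc κ, ∀ i < cardSucc κ, ∃ j < b, graphBelow D (G j) β = graphBelow D (G i) β := by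
  classical
  let first : Set (Ordinal.{0} × Ordinal.{0}) → Ordinal.{0} :=
    fun t => sInf {j | j < cardSucc κ ∧ graphBelow D (G j) β = t}
  have first_spec : ∀ i < cardSucc κ, first (graphBelow D (G i) β) < cardSucc κ ∧
      graphBelow D (G (first (graphBelow D (G i) β))) β = graphBelow D (G i) β :=
    fun i hi => csInf_mem (s := {j | j < cardSucc κ ∧ graphBelow D (G j) β = _}) ⟨i, hi, rfl⟩
  let graphs : Set (Set (Ordinal.{0} × Ordinal.{0})) :=
    {t | ∃ i < cardSucc κ, graphBelow D (G i) β = t}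
  have hprod : #(D ×ˢ Set.Iio β) ≤ lift.{1} κ.card := by
    rw [mk_setProd, mk_Iio_ordinal]
    refine (mul_le_mul' hD.le (lift_le.2 (card_le_of_lt_cardSucc hβ))).trans ?_
    exact (mul_eq_self hκ.aleph0_le_lift_card).le
  have hgraphs : #graphs ≤ lift.{1} κ.card := by
    refine (mk_le_mk_of_subset ?_).trans (mk_setOf_subset_mk_lt_le hκ.1.isRegular.lift
      hκ.1.isStrongLimit.isStrongPrelimit.lift hprod)
    rintro _ ⟨i, -, rfl⟩
    exact ⟨fun z hz => ⟨hz.1, hz.2.2⟩, (mk_graphBelow_le D (G i) β).trans_lt hD⟩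
  obtain ⟨b, hb, hfirst⟩ := Ordinal.exists_lt_forall_lt_of_mk_lt_cof (s := first '' graphs)
    (by rintro _ ⟨_, ⟨i, hi, rfl⟩, rfl⟩; exact (first_spec i hi).1)
    (mk_image_le.trans_lt (hgraphs.trans_lt hκ.lift_card_lt_cof_cardSucc))
  exact ⟨b, hb, fun i hi => ⟨_, hfirst _ ⟨_, ⟨i, hi, rfl⟩, rfl⟩, (first_spec i hi).2⟩⟩

theorem exists_aligned_pair (hκ : InaccOrd κ) {D : Set Ordinal.{0}} (hD : #D < lift.{1} κ.card)
    (G : Ordinal.{0} → Ordinal.{0} → Ordinal.{0})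
    (hG_lt : ∀ i < cardSucc κ, ∀ x ∈ D, G i x < cardSucc κ)
    (hG_inj : ∀ i < cardSucc κ, Set.InjOn (G i) D) :
    ∃ i < cardSucc κ, ∃ j < i, ∀ x ∈ D, ∀ y ∈ D, G i x = G j y → x = y := by
  have hbound : ∀ γ < cardSucc κ, ∃ b < cardSucc κ, (∀ x ∈ D, G γ x < b) ∧
      ∀ i < cardSucc κ, ∃ j < b, graphBelow D (G j) γ = graphBelow D (G i) γ := by
    intro γ hγ
    obtain ⟨b₁, hb₁, hG⟩ := Ordinal.exists_lt_forall_lt_of_mk_lt_cof (s := G γ '' D)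
      (by rintro _ ⟨x, hx, rfl⟩; exact hG_lt γ hγ x hx)
      (mk_image_le.trans_lt (hD.trans hκ.lift_card_lt_cof_cardSucc))
    obtain ⟨b₂, hb₂, hgraph⟩ := exists_bound_graphBelow hκ hD G hγ
    refine ⟨max b₁ b₂, max_lt hb₁ hb₂, fun x hx => ?_, fun i hi => ?_⟩
    · exact (hG _ (Set.mem_image_of_mem _ hx)).trans_le (le_max_left _ _)
    · obtain ⟨j, hj, hji⟩ := hgraph i hi
      exact ⟨j, hj.trans_le (le_max_right _ _), hji⟩
  choose! F hF_lt hF using hbound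
  obtain ⟨δ, hδ, hδcof, hδF⟩ := Ordinal.exists_cof_eq_forall_lt_of_isRegular
    hκ.isRegular_succ_card hκ.isSuccLimit (Order.lt_succ _) hF_lt
  -- `δ` has cofinality `κ`, so the fewer than `κ` values of `G δ` below `δ` are bounded below `δ`.
  obtain ⟨β, hβ, hβG⟩ := Ordinal.exists_lt_forall_lt_of_mk_lt_cof
    (s := {o ∈ G δ '' D | o < δ}) (fun _ h => h.2)
    ((mk_le_mk_of_subset (Set.sep_subset _ _)).trans_lt (mk_image_le.trans_lt
      (by rwa [hδcof, hκ.cof_eq])))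
  obtain ⟨j, hjβ, hj⟩ := (hF β (hβ.trans hδ)).2 δ hδ
  have hjδ : j < δ := hjβ.trans (hδF β hβ)
  refine ⟨δ, hδ, j, hjδ, fun x hx y hy hxy => ?_⟩
  have hGjy : G j y < δ := ((hF j (hjδ.trans hδ)).1 y hy).trans (hδF j hjδ)
  have hy' : (y, G j y) ∈ graphBelow D (G δ) β := by
    rw [← hj]
    exact ⟨hy, rfl, hxy ▸ hβG _ ⟨⟨x, hx, rfl⟩, hxy ▸ hGjy⟩⟩
  exact hG_inj δ hδ hx hy (hxy.trans hy'.2.1.symm)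

end AlignedPair

namespace LvTree

variable (T : LvTree) (top : Ordinal.{0}) (new : Set Ordinal.{0})
  (parent : Ordinal.{0} → Ordinal.{0})

open Classical in
/-- `T` with the nodes of `new` added as a level `top + 1`, each `z ∈ new` directly above
`parent z`. -/
def extendTop (hlevel : ∀ x ∈ T.node, T.level x ≤ top) (hnew : ∀ z ∈ new, z ∉ T.node)
    (hparent : ∀ z ∈ new, parent z ∈ T.lvl top) : LvTree where
  node := T.node ∪ new
  lt x z := T.lt x z ∨ (z ∈ new ∧ (T.lt x (parent z) ∨ x = parent z))
  level z := if z ∈ T.node then T.level z else top + 1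
  lt_mem := by
    rintro x z (h | ⟨hz, h | rfl⟩)
    · exact ⟨Or.inl (T.lt_mem h).1, Or.inl (T.lt_mem h).2⟩
    · exact ⟨Or.inl (T.lt_mem h).1, Or.inr hz⟩
    · exact ⟨Or.inl (hparent z hz).1, Or.inr hz⟩
  lt_trans' := by
    rintro x y z (hxy | ⟨hy, -⟩) hyz
    · rcases hyz with hyz | ⟨hz, hyz | rfl⟩
      · exact Or.inl (T.lt_trans' hxy hyz)
      · exact Or.inr ⟨hz, Or.inl (T.lt_trans' hxy hyz)⟩
      · exact Or.inr ⟨hz, Or.inl hxy⟩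
    · rcases hyz with hyz | ⟨hz, hyz | rfl⟩
      · exact absurd (T.lt_mem hyz).1 (hnew y hy)
      · exact absurd (T.lt_mem hyz).1 (hnew y hy)
      · exact absurd (hparent z hz).1 (hnew _ hy)
  level_mono := by
    rintro x z (h | ⟨hz, h⟩)
    · simp only [if_pos (T.lt_mem h).1, if_pos (T.lt_mem h).2]
      exact T.level_mono h
    · have hx : x ∈ T.node := by
        rcases h with h | rfl
        exacts [(T.lt_mem h).1, (hparent z hz).1]
      simp only [if_pos hx, if_neg (hnew z hz)]
      exact Order.lt_add_one_iff.2 (hlevel x hx)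
  pred_linear := by
    intro x y z hy hz
    by_cases hx : x ∈ T.node
    · have hy' : T.lt y x := hy.resolve_right fun h => hnew x h.1 hx
      have hz' : T.lt z x := hz.resolve_right fun h => hnew x h.1 hx
      rcases T.pred_linear hy' hz' with h | h | h
      exacts [Or.inl (Or.inl h), Or.inr (Or.inl h), Or.inr (Or.inr (Or.inl h))]
    · obtain ⟨-, hy⟩ := hy.resolve_left fun h => hx (T.lt_mem h).2
      obtain ⟨-, hz⟩ := hz.resolve_left fun h => hx (T.lt_mem h).2
      rcases hy with hy | rfl <;> rcases hz with hz | rfl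
      · rcases T.pred_linear hy hz with h | h | h
        exacts [Or.inl (Or.inl h), Or.inr (Or.inl h), Or.inr (Or.inr (Or.inl h))]
      · exact Or.inl (Or.inl hy)
      · exact Or.inr (Or.inr (Or.inl hz))
      · exact Or.inr (Or.inl rfl)
  pred_ex := by
    rintro x (hx | hx) β hβ
    · simp only [if_pos hx] at hβ
      obtain ⟨y, hyx, rfl⟩ := T.pred_ex x hx β hβ
      exact ⟨y, Or.inl hyx, if_pos (T.lt_mem hyx).1⟩
    · simp only [if_neg (hnew x hx), Order.lt_add_one_iff] at hβ
      obtain ⟨hp, hplevel⟩ := hparent x hx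
      rcases hβ.lt_or_eq with hβ | rfl
      · obtain ⟨y, hyp, rfl⟩ := T.pred_ex _ hp β (hplevel ▸ hβ)
        exact ⟨y, Or.inr ⟨hx, Or.inl hyp⟩, if_pos (T.lt_mem hyp).1⟩
      · exact ⟨parent x, Or.inr ⟨hx, Or.inr rfl⟩, by simp only [if_pos hp, hplevel]⟩

variable {T : LvTree} {top : Ordinal.{0}} {new : Set Ordinal.{0}}
  {parent : Ordinal.{0} → Ordinal.{0}}
  {hlevel : ∀ x ∈ T.node, T.level x ≤ top} {hnew : ∀ z ∈ new, z ∉ T.node}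
  {hparent : ∀ z ∈ new, parent z ∈ T.lvl top}

theorem level_extendTop_of_mem {x : Ordinal.{0}} (hx : x ∈ T.node) :
    (T.extendTop top new parent hlevel hnew hparent).level x = T.level x :=
  if_pos hx

theorem level_extendTop_of_mem_new {z : Ordinal.{0}} (hz : z ∈ new) :
    (T.extendTop top new parent hlevel hnew hparent).level z = top + 1 :=
  if_neg (hnew z hz)

theorem lt_extendTop_iff_of_mem {x z : Ordinal.{0}} (hz : z ∈ T.node) :
    (T.extendTop top new parent hlevel hnew hparent).lt x z ↔ T.lt x z :=
  ⟨fun h => h.resolve_right fun h' => hnew z h'.1 hz, Or.inl⟩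

theorem lvl_extendTop_of_le {β : Ordinal.{0}} (hβ : β ≤ top) :
    (T.extendTop top new parent hlevel hnew hparent).lvl β = T.lvl β := by
  ext z
  constructor
  · rintro ⟨hz | hz, hzβ⟩
    · exact ⟨hz, (level_extendTop_of_mem hz).symm.trans hzβ⟩
    · rw [level_extendTop_of_mem_new hz] at hzβ
      exact absurd hβ (hzβ ▸ (Order.lt_add_one_iff.2 le_rfl).not_ge)
  · rintro ⟨hz, hzβ⟩
    exact ⟨Or.inl hz, (level_extendTop_of_mem hz).trans hzβ⟩

theorem lvl_extendTop_add_one :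
    (T.extendTop top new parent hlevel hnew hparent).lvl (top + 1) = new := by
  ext z
  constructor
  · rintro ⟨hz | hz, hzβ⟩
    · rw [level_extendTop_of_mem hz] at hzβ
      exact absurd (hlevel z hz) (hzβ ▸ (Order.lt_add_one_iff.2 le_rfl).not_ge)
    · exact hz
  · intro hz
    exact ⟨Or.inr hz, level_extendTop_of_mem_new hz⟩

theorem lvl_extendTop_subset (β : Ordinal.{0}) :
    (T.extendTop top new parent hlevel hnew hparent).lvl β ⊆ T.lvl β ∪ new := by
  rintro z ⟨hz | hz, hzβ⟩
  · exact Or.inl ⟨hz, (level_extendTop_of_mem hz).symm.trans hzβ⟩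
  · exact Or.inr hz

theorem _root_.RegressiveAt.extendTop {δ : Ordinal.{0}} (h : RegressiveAt T δ) (hδ : δ ≤ top) :
    RegressiveAt (T.extendTop top new parent hlevel hnew hparent) δ := by
  obtain ⟨f, hf_lt, hf_meet⟩ := h
  rw [RegressiveAt, lvl_extendTop_of_le hδ]
  refine ⟨f, fun x hx => Or.inl (hf_lt x hx), fun x hx y hy hxy z hzx hzy => ?_⟩
  rw [lt_extendTop_iff_of_mem hx.1] at hzx
  rw [lt_extendTop_iff_of_mem hy.1] at hzy
  have hxy' : T.Incomp x y := ⟨fun h => hxy.1 (Or.inl h), fun h => hxy.2.1 (Or.inl h), hxy.2.2⟩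
  exact (hf_meet x hx y hy hxy' z hzx hzy).imp Or.inl Or.inl

end LvTree

namespace KCond

variable {κ : Ordinal.{0}}

theorem mk_node_lt (hκ : InaccOrd κ) (p : KCond κ) : #p.t.node < lift.{1} κ.card := by
  have hsub : p.t.node ⊆ ⋃ β : Set.Iio (p.top + 1), p.t.lvl β := fun x hx =>
    Set.mem_iUnion.2 ⟨⟨p.t.level x, Order.lt_add_one_iff.2 (p.level_le x hx)⟩, hx, rfl⟩
  refine (mk_le_mk_of_subset hsub).trans_lt (mk_iUnion_le_sum_mk.trans_lt ?_)
  refine sum_lt_of_isRegular hκ.1.isRegular.lift ?_ fun β => p.small β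
  rw [mk_Iio_ordinal, lift_lt]
  exact hκ.card_lt (hκ.isSuccLimit.add_one_lt p.top_lt)

/-- The data of a one-level end-extension of `p`: the nodes `new` of the new top level, the node
`parent z` of the old top level below each `z ∈ new`, and the new labelling `h`. -/
structure TopExt (p : KCond κ) where
  new : Set Ordinal.{0}
  parent : Ordinal.{0} → Ordinal.{0}
  h : Ordinal.{0} → Ordinal.{0}
  new_subset : new ⊆ Set.Iio κ
  not_mem_node : ∀ z ∈ new, z ∉ p.t.node
  parent_mem : ∀ z ∈ new, parent z ∈ p.t.lvl p.top
  parent_surj : ∀ x ∈ p.t.lvl p.top, ∃ z ∈ new, parent z = x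
  mk_new_lt : #new < lift.{1} κ.card
  injOn_h : Set.InjOn h new
  h_lt : ∀ z ∈ new, h z < cardSucc κ

namespace TopExt

variable {p : KCond κ} (e : p.TopExt)

def tree : LvTree :=
  p.t.extendTop p.top e.new e.parent p.level_le e.not_mem_node e.parent_mem

theorem normal_tree {x β : Ordinal.{0}} (hx : x ∈ e.tree.node) (hxβ : e.tree.level x ≤ β)
    (hβ : β ≤ p.top + 1) : ∃ y ∈ e.tree.lvl β, e.tree.lt x y ∨ x = y := by
  rcases hβ.lt_or_eq with hβ | rfl
  · rw [Order.lt_add_one_iff] at hβ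
    have hx' : x ∈ p.t.node := hx.resolve_right fun hx' => by
      rw [tree, LvTree.level_extendTop_of_mem_new hx'] at hxβ
      exact (Order.lt_add_one_iff.2 hβ).not_ge hxβ
    rw [tree, LvTree.level_extendTop_of_mem hx'] at hxβ
    obtain ⟨y, hy, hxy⟩ := p.normal x hx' β hxβ hβ
    exact ⟨y, by rwa [tree, LvTree.lvl_extendTop_of_le hβ], hxy.imp_left Or.inl⟩
  · rw [tree, LvTree.lvl_extendTop_add_one]
    rcases hx with hx | hx
    · obtain ⟨y, hy, hxy⟩ := p.normal x hx p.top (p.level_le x hx) le_rfl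
      obtain ⟨z, hz, rfl⟩ := e.parent_surj y hy
      exact ⟨z, hz, Or.inl (Or.inr ⟨hz, hxy⟩)⟩
    · exact ⟨x, hx, Or.inr rfl⟩

def cond (hκ : Order.IsSuccLimit κ) : KCond κ where
  t := e.tree
  top := p.top + 1
  h := e.h
  node_sub := by
    rintro z (hz | hz)
    exacts [p.node_sub hz, e.new_subset hz]
  top_lt := hκ.add_one_lt p.top_lt
  level_le := by
    rintro z (hz | hz)
    · rw [tree, LvTree.level_extendTop_of_mem hz]
      exact (p.level_le z hz).trans le_self_add
    · rw [tree, LvTree.level_extendTop_of_mem_new hz]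
  levels_ne := by
    intro β hβ
    rcases le_or_gt β p.top with hβ' | hβ'
    · rw [tree, LvTree.lvl_extendTop_of_le hβ']
      exact p.levels_ne β hβ'
    · rw [hβ.antisymm (Order.add_one_le_of_lt hβ'), tree, LvTree.lvl_extendTop_add_one]
      obtain ⟨x, hx⟩ := p.levels_ne p.top le_rfl
      obtain ⟨z, hz, -⟩ := e.parent_surj x hx
      exact ⟨z, hz⟩
  small β := by
    refine (mk_le_mk_of_subset (LvTree.lvl_extendTop_subset β)).trans_lt
      ((mk_union_le _ _).trans_lt (add_lt_of_lt ?_ (p.small β) e.mk_new_lt))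
    rw [← lift_aleph0.{1, 0}, lift_le, Ordinal.aleph0_le_card]
    exact Ordinal.omega0_le_of_isSuccLimit hκ
  normal _ hx _ hxβ hβ := e.normal_tree hx hxβ hβ
  regr δ hδ hδκ := by
    have hδ' : δ ≤ p.top := Order.lt_add_one_iff.1 <| hδ.lt_of_ne fun h =>
      lt_irrefl _ ((h ▸ hδκ.isSuccLimit).add_one_lt (Order.lt_add_one_iff.2 le_rfl))
    exact RegressiveAt.extendTop (p.regr δ hδ' hδκ) hδ'
  h_inj x hx y hy hxy := by
    rw [tree, LvTree.lvl_extendTop_add_one] at hx hy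
    exact e.injOn_h hx hy hxy
  h_lt x hx := by
    rw [tree, LvTree.lvl_extendTop_add_one] at hx
    exact e.h_lt x hx

theorem lvl_cond_top (hκ : Order.IsSuccLimit κ) : (e.cond hκ).t.lvl (e.cond hκ).top = e.new :=
  LvTree.lvl_extendTop_add_one (hlevel := p.level_le) (hnew := e.not_mem_node)
    (hparent := e.parent_mem)

end TopExt

structure SameTree (p q : KCond κ) : Prop where
  top_eq : p.top = q.top
  node_eq : p.t.node = q.t.node
  lt_iff : ∀ x y, p.t.lt x y ↔ q.t.lt x y
  level_eq : ∀ x ∈ p.t.node, p.t.level x = q.t.level x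

theorem SameTree.lvl_top_eq {p q : KCond κ} (h : p.SameTree q) :
    p.t.lvl p.top = q.t.lvl q.top := by
  ext x
  refine ⟨fun ⟨hx, hxl⟩ => ⟨h.node_eq ▸ hx, ?_⟩, fun ⟨hx, hxl⟩ => ⟨h.node_eq ▸ hx, ?_⟩⟩
  · rw [← h.level_eq x hx, hxl, h.top_eq]
  · rw [h.level_eq x (h.node_eq ▸ hx), hxl, h.top_eq]

theorem SameTree.refl (p : KCond κ) : p.SameTree p :=
  ⟨rfl, rfl, fun _ _ => Iff.rfl, fun _ _ => rfl⟩

theorem TopExt.cond_le {p q : KCond κ} (e : p.TopExt) (hκ : Order.IsSuccLimit κ)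
    (hpq : p.SameTree q) (hrange : ∀ x ∈ q.t.lvl q.top, ∃ z ∈ e.new, e.h z = q.h x)
    (halign : ∀ x ∈ q.t.lvl q.top, ∀ z ∈ e.new, q.h x = e.h z → e.parent z = x) :
    KLE κ (e.cond hκ) q := by
  obtain ⟨htop, hnode, hlt, hlevel⟩ := hpq
  have hlvl := e.lvl_cond_top hκ
  refine ⟨?_, fun x => ?_, fun x _ y hy => ?_, fun x hx => ?_, ?_, fun x hx y hy hxy => ?_⟩
  · exact htop ▸ le_self_add
  · change x ∈ q.t.node ↔ x ∈ p.t.node ∪ e.new ∧ e.tree.level x ≤ q.top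
    rw [← hnode, ← htop]
    refine ⟨fun hx => ⟨Or.inl hx, (LvTree.level_extendTop_of_mem hx).trans_le (p.level_le x hx)⟩,
      fun ⟨hx, hxl⟩ => hx.resolve_right fun hx' => ?_⟩
    rw [tree, LvTree.level_extendTop_of_mem_new hx'] at hxl
    exact (Order.lt_add_one_iff.2 le_rfl).not_ge hxl
  · change q.t.lt x y ↔ e.tree.lt x y
    rw [← hlt, tree, LvTree.lt_extendTop_iff_of_mem (hnode ▸ hy)]
  · change q.t.level x = e.tree.level x
    rw [tree, LvTree.level_extendTop_of_mem (hnode ▸ hx), hlevel x (hnode ▸ hx)]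
  · rintro ξ ⟨x, hx, rfl⟩
    obtain ⟨z, hz, hzx⟩ := hrange x hx
    exact ⟨z, hlvl ▸ hz, hzx⟩
  · rw [hlvl] at hy
    exact Or.inl (Or.inr ⟨hy, Or.inr (halign x hx y hy hxy).symm⟩)

theorem exists_topExt (hκ : InaccOrd κ) (p : KCond κ) {S : Set (Ordinal.{0} × Ordinal.{0})}
    (hS : ∀ s ∈ S, s.1 ∈ p.t.lvl p.top) (hS_surj : ∀ x ∈ p.t.lvl p.top, ∃ ξ, (x, ξ) ∈ S)
    (hS_small : #S < lift.{1} κ.card) (hS_inj : S.InjOn Prod.snd)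
    (hS_lt : ∀ s ∈ S, s.2 < cardSucc κ) :
    ∃ e : p.TopExt, ∀ x ξ, (x, ξ) ∈ S ↔ ∃ z ∈ e.new, e.parent z = x ∧ e.h z = ξ := by
  obtain ⟨ν, hνκ, hν⟩ := Ordinal.exists_lt_forall_lt_of_mk_lt_cof (s := p.t.node)
    (fun x hx => p.node_sub hx) (by rw [hκ.cof_eq]; exact mk_node_lt hκ p)
  obtain ⟨g⟩ : Nonempty (S ↪ Set.Iio κ) := by rw [← le_def, mk_Iio_ordinal]; exact hS_small.le
  obtain ⟨x₀, hx₀⟩ := p.levels_ne p.top le_rfl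
  obtain ⟨ξ₀, hξ₀⟩ := hS_surj x₀ hx₀
  have : Nonempty S := ⟨⟨_, hξ₀⟩⟩
  -- The new node coding `s ∈ S` is `ν + g s`, which lies above every node of `p`.
  let code : S → Ordinal.{0} := fun s => ν + g s
  have decode_code : ∀ s, Function.invFun code (code s) = s := Function.leftInverse_invFun
    fun s t h => g.injective (Subtype.ext (add_left_cancel h))
  refine ⟨⟨Set.range code, fun z => (Function.invFun code z).1.1,
    fun z => (Function.invFun code z).1.2, ?_, ?_, ?_, ?_, mk_range_le.trans_lt hS_small, ?_, ?_⟩,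
    fun x ξ => ⟨fun h => ?_, ?_⟩⟩
  · rintro _ ⟨s, rfl⟩
    exact hκ.add_lt hνκ (g s).2
  · rintro _ ⟨s, rfl⟩ hs
    exact (hν _ hs).not_ge le_self_add
  · rintro _ ⟨s, rfl⟩
    simpa only [decode_code] using hS _ s.2
  · intro x hx
    obtain ⟨ξ, hξ⟩ := hS_surj x hx
    exact ⟨code ⟨_, hξ⟩, ⟨_, rfl⟩, by simp only [decode_code]⟩
  · rintro _ ⟨s, rfl⟩ _ ⟨t, rfl⟩ hst
    simp only [decode_code] at hst
    rw [Subtype.ext (hS_inj s.2 t.2 hst)]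
  · rintro _ ⟨s, rfl⟩
    simpa only [decode_code] using hS_lt _ s.2
  · exact ⟨code ⟨_, h⟩, ⟨_, rfl⟩, by simp only [decode_code], by simp only [decode_code]⟩
  · rintro ⟨_, ⟨s, rfl⟩, rfl, rfl⟩
    simpa only [decode_code] using s.2

theorem exists_le_le_of_aligned (hκ : InaccOrd κ) {p q : KCond κ} (hpq : p.SameTree q)
    (halign : ∀ x ∈ p.t.lvl p.top, ∀ y ∈ p.t.lvl p.top, p.h x = q.h y → x = y) :
    ∃ r : KCond κ, KLE κ r p ∧ KLE κ r q := by
  set D := p.t.lvl p.top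
  have hDq : q.t.lvl q.top = D := hpq.lvl_top_eq.symm
  -- Above each `x ∈ D` the common extension gets nodes labelled `p.h x` and `q.h x`.
  let S := (fun x => (x, p.h x)) '' D ∪ (fun x => (x, q.h x)) '' D
  have hS_inj : S.InjOn Prod.snd := by
    rintro _ (⟨x, hx, rfl⟩ | ⟨x, hx, rfl⟩) _ (⟨y, hy, rfl⟩ | ⟨y, hy, rfl⟩) (h : _ = _)
    · rw [p.h_inj x hx y hy h]
    · obtain rfl := halign x hx y hy h
      exact congrArg (Prod.mk x) h
    · obtain rfl := halign y hy x hx h.symm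
      exact congrArg (Prod.mk y) h
    · rw [q.h_inj x (hDq ▸ hx) y (hDq ▸ hy) h]
  obtain ⟨e, he⟩ := exists_topExt hκ p (S := S)
    (by rintro _ (⟨x, hx, rfl⟩ | ⟨x, hx, rfl⟩) <;> exact hx)
    (fun x hx => ⟨p.h x, Or.inl ⟨x, hx, rfl⟩⟩)
    ((mk_union_le _ _).trans_lt (add_lt_of_lt hκ.aleph0_le_lift_card
      (mk_image_le.trans_lt (p.small _)) (mk_image_le.trans_lt (p.small _))))
    hS_inj
    (by rintro _ (⟨x, hx, rfl⟩ | ⟨x, hx, rfl⟩); exacts [p.h_lt x hx, q.h_lt x (hDq ▸ hx)])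
  have hle : ∀ r : KCond κ, p.SameTree r → (∀ x ∈ D, (x, r.h x) ∈ S) →
      KLE κ (e.cond hκ.isSuccLimit) r := by
    intro r hpr hrS
    refine e.cond_le _ hpr (fun x hx => ?_) (fun x hx z hz hxz => ?_) <;>
      rw [← hpr.lvl_top_eq] at hx
    · obtain ⟨z, hz, -, hzx⟩ := (he x (r.h x)).1 (hrS x hx)
      exact ⟨z, hz, hzx⟩
    · exact congrArg Prod.fst (hS_inj ((he _ _).2 ⟨z, hz, rfl, rfl⟩) (hrS x hx) hxz.symm)
  exact ⟨_, hle p (SameTree.refl p) fun x hx => Or.inl ⟨x, hx, rfl⟩,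
    hle q hpq fun x hx => Or.inr ⟨x, hx, rfl⟩⟩

def treeData (p : KCond κ) : Ordinal.{0} × Set Ordinal.{0} ×
    Set (Ordinal.{0} × Ordinal.{0}) × Set (Ordinal.{0} × Ordinal.{0}) :=
  (p.top, p.t.node, {z | p.t.lt z.1 z.2}, {z | z.1 ∈ p.t.node ∧ p.t.level z.1 = z.2})

theorem sameTree_of_treeData_eq {p q : KCond κ} (h : p.treeData = q.treeData) : p.SameTree q := by
  simp only [treeData, Prod.mk.injEq] at h
  obtain ⟨htop, hnode, hlt, hlevel⟩ := h
  refine ⟨htop, hnode, fun x y => Set.ext_iff.1 hlt (x, y), fun x hx => ?_⟩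
  exact ((Set.ext_iff.1 hlevel (x, p.t.level x)).1 ⟨hx, rfl⟩).2.symm

theorem mk_range_treeData_le (hκ : InaccOrd κ) :
    #(Set.range (treeData (κ := κ))) ≤ lift.{1} κ.card := by
  let L := lift.{1} κ.card
  have hL : L * L = L := mul_eq_self hκ.aleph0_le_lift_card
  have hIio : #(Set.Iio κ) = L := mk_Iio_ordinal κ
  have hIio2 : #(Set.Iio κ ×ˢ Set.Iio κ) = L := by rw [mk_setProd, hIio, hL]
  have hsmall {α : Type 1} {T : Set α} (hT : #T = L) : #{s : Set α | s ⊆ T ∧ #s < L} ≤ L :=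
    mk_setOf_subset_mk_lt_le hκ.1.isRegular.lift hκ.1.isStrongLimit.isStrongPrelimit.lift hT.le
  have hrange : Set.range (treeData (κ := κ)) ⊆ Set.Iio κ ×ˢ {s | s ⊆ Set.Iio κ ∧ #s < L} ×ˢ
      {s | s ⊆ Set.Iio κ ×ˢ Set.Iio κ ∧ #s < L} ×ˢ {s | s ⊆ Set.Iio κ ×ˢ Set.Iio κ ∧ #s < L} := by
    rintro _ ⟨p, rfl⟩
    have hnode := mk_node_lt hκ p
    refine ⟨p.top_lt, ⟨p.node_sub, hnode⟩, ⟨?_, ?_⟩, ⟨?_, ?_⟩⟩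
    · exact fun z hz => ⟨p.node_sub (p.t.lt_mem hz).1, p.node_sub (p.t.lt_mem hz).2⟩
    · have hsub : {z : Ordinal.{0} × Ordinal.{0} | p.t.lt z.1 z.2} ⊆ p.t.node ×ˢ p.t.node :=
        fun z hz => p.t.lt_mem hz
      refine (mk_le_mk_of_subset hsub).trans_lt ?_
      rw [mk_setProd]
      exact mul_lt_of_lt hκ.aleph0_le_lift_card hnode hnode
    · exact fun z hz => ⟨p.node_sub hz.1, hz.2 ▸ (p.level_le _ hz.1).trans_lt p.top_lt⟩
    · have hsub : {z : Ordinal.{0} × Ordinal.{0} | z.1 ∈ p.t.node ∧ p.t.level z.1 = z.2} ⊆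
          (fun x => (x, p.t.level x)) '' p.t.node := fun z hz => ⟨z.1, hz.1, Prod.ext rfl hz.2⟩
      exact (mk_le_mk_of_subset hsub).trans_lt (mk_image_le.trans_lt hnode)
  refine (mk_le_mk_of_subset hrange).trans ?_
  simp only [mk_setProd]
  calc _ ≤ L * (L * (L * L)) := by
        gcongr
        exacts [hIio.le, hsmall hIio, hsmall hIio2, hsmall hIio2]
    _ = L := by rw [hL, hL, hL]

theorem mk_le_of_pairwise_incompatible_of_treeData_eq (hκ : InaccOrd κ) {A : Set (KCond κ)}
    (hA : A.Pairwise fun p q => ¬ ∃ r, KLE κ r p ∧ KLE κ r q)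
    (htree : ∀ p ∈ A, ∀ q ∈ A, p.treeData = q.treeData) :
    #A ≤ lift.{1} κ.card := by
  by_contra! hA_big
  obtain ⟨f⟩ : Nonempty (Set.Iio (cardSucc κ) ↪ A) := by
    rw [← Cardinal.le_def, mk_Iio_ordinal, cardSucc, card_ord, lift_succ]
    exact Order.succ_le_of_lt hA_big
  let P : Ordinal.{0} → KCond κ := fun i =>
    if hi : i < cardSucc κ then f ⟨i, hi⟩ else f ⟨0, hκ.isRegular_succ_card.ord_pos⟩
  have hP : ∀ i (hi : i < cardSucc κ), P i = f ⟨i, hi⟩ := fun i hi => dif_pos hi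
  have hPA : ∀ i, P i ∈ A := fun i => by
    simp only [P]; split_ifs <;> exact Subtype.prop _
  let D := (P 0).t.lvl (P 0).top
  have hD : ∀ i, (P i).t.lvl (P i).top = D := fun i =>
    (sameTree_of_treeData_eq (htree _ (hPA 0) _ (hPA i))).lvl_top_eq.symm
  obtain ⟨i, hi, j, hji, halign⟩ := exists_aligned_pair hκ ((P 0).small _) (fun i => (P i).h)
    (fun i _ x hx => (P i).h_lt x (hD i ▸ hx))
    (fun i _ x hx y hy => (P i).h_inj x (hD i ▸ hx) y (hD i ▸ hy))
  have hne : P i ≠ P j := by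
    rw [hP i hi, hP j (hji.trans hi)]
    exact fun h => hji.ne' (congrArg Subtype.val (f.injective (Subtype.ext h)))
  exact hA (hPA i) (hPA j) hne <| exists_le_le_of_aligned hκ
    (sameTree_of_treeData_eq (htree _ (hPA i) _ (hPA j))) (by rwa [hD i])

end KCond

/-- If `κ` is inaccessible and `2^{<κ} = κ`, then `K_κ` is
`κ⁺`-cc: every antichain has size at most `κ`. -/
theorem stmt_5 (κ : Ordinal.{0}) (hκ : InaccOrd κ)
    (hpow : ∀ μ : Cardinal.{0}, μ < κ.card → (2 : Cardinal.{0}) ^ μ ≤ κ.card) :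
    ∀ A : Set (KCond κ),
      (∀ p ∈ A, ∀ q ∈ A, p ≠ q → ¬ ∃ r : KCond κ, KLE κ r p ∧ KLE κ r q) →
      Cardinal.mk A ≤ Cardinal.lift.{1} κ.card := by
  intro A hA
  let data : A → Set.range (KCond.treeData (κ := κ)) := fun p => ⟨p.1.treeData, p.1, rfl⟩
  have hfiber : ∀ d, #(data ⁻¹' {d}) ≤ lift.{1} κ.card := by
    intro d
    rw [← mk_image_eq Subtype.val_injective]
    refine KCond.mk_le_of_pairwise_incompatible_of_treeData_eq hκ
      (Set.Pairwise.mono (Subtype.coe_image_subset _ _) hA) ?_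
    rintro _ ⟨p, hp, rfl⟩ _ ⟨q, hq, rfl⟩
    exact congrArg Subtype.val (hp.trans hq.symm)
  calc #A ≤ #(Set.range (KCond.treeData (κ := κ))) * lift.{1} κ.card :=
        mk_le_mk_mul_of_mk_preimage_le data hfiber
    _ ≤ lift.{1} κ.card * lift.{1} κ.card := by
        gcongr
        exact KCond.mk_range_treeData_le hκ
    _ = lift.{1} κ.card := mul_eq_self hκ.aleph0_le_lift_card
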